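/- arXiv:1702.01308 — 2 statements merged into one kernel-verified Lean document; each statement's English description precedes it below -/
import Mathlib

section
/- Let $k$ be a finite field of order $p$ with nontrivial additive character $\psi$, and let $V$ be a finite-dimensional $k$-vector space. For every $L, d$ there is a constant $C_{L,d} > 0$ (independent of $\dim V$) such that: if $P : V^d \to k$ is a multilinear homogeneous polynomial of degree $d \geq 2$ and rank at most $L$, then $\mathbb{E}_{\bar x \in V^d}\, \psi(P(\bar x)) \geq C_{L,d}$. -/
/-!
Fix the coordinate `j = 0`. Since `P` is linear in `x_j`, summing `ψ (P x)` over `x_j` kills every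
fibre on which the functional `v ↦ P (update x j v)` is nonzero, so the average of `ψ ∘ P` is the
density of the points where this functional vanishes; in particular it is real and nonnegative.
In each product `Q_i R_i` one factor `G_i` does not involve `x_j`, and the functional vanishes
wherever all the `G_i` do. Finally, `L` functions each multilinear in a nonempty set of coordinates
have a common zero set of density at least `q ^ (-d L)`: with all coordinates but one frozen, the
functions that are linear in it cut out a subspace of codimension at most their number, and one
inducts over the coordinates.
-/

open Finset

/-- `Q` depends only on the coordinates in `S` and is linear in each coordinate in `S`. -/
def MultilinearOn {k V : Type*} [Field k] [AddCommGroup V] [Module k V] {d : ℕ}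
    (S : Finset (Fin d)) (Q : (Fin d → V) → k) : Prop :=
  (∀ (x : Fin d → V), ∀ j ∈ S, ∀ v w : V,
      Q (Function.update x j (v + w)) =
        Q (Function.update x j v) + Q (Function.update x j w)) ∧
  (∀ (x : Fin d → V), ∀ j ∈ S, ∀ (c : k) (v : V),
      Q (Function.update x j (c • v)) = c * Q (Function.update x j v)) ∧
  (∀ x y : Fin d → V, (∀ j ∈ S, x j = y j) → Q x = Q y)

theorem Fintype.sum_sum_update_eq_card_nsmul {ι V M : Type*} [DecidableEq ι] [Fintype ι]
    [Fintype V] [AddCommMonoid M] (j : ι) (F : (ι → V) → M) :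
    ∑ x, ∑ v, F (Function.update x j v) = Fintype.card V • ∑ x, F x := by
  have hinv : Function.Involutive fun p : (ι → V) × V => (Function.update p.1 j p.2, p.1 j) := by
    rintro ⟨x, v⟩
    simp
  rw [← Fintype.sum_prod_type', ← Equiv.sum_comp hinv.toPerm, Fintype.sum_prod_type,
    Finset.sum_comm]
  simp

theorem AddMonoidHom.card_le_card_mul_card_ker {G H : Type*} [AddGroup G] [AddGroup H] [Finite H]
    (f : G →+ H) : Nat.card G ≤ Nat.card H * Nat.card f.ker := by
  rw [← f.ker.card_mul_index, AddSubgroup.index_ker, mul_comm]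
  exact Nat.mul_le_mul_right _ (Nat.card_le_card_of_injective _ Subtype.val_injective)

theorem LinearMap.card_le_pow_mul_card_filter_forall_eq_zero {k V ι : Type*} [Field k] [Fintype k]
    [DecidableEq k] [AddCommGroup V] [Module k V] [Fintype V] [Fintype ι] (ℓ : ι → V →ₗ[k] k) :
    Fintype.card V ≤ Fintype.card k ^ Fintype.card ι * #{v | ∀ i, ℓ i v = 0} := by
  have := (LinearMap.pi ℓ).toAddMonoidHom.card_le_card_mul_card_ker
  simp only [Nat.card_fun, Nat.card_eq_fintype_card] at this
  convert this using 2
  rw [← Fintype.card_subtype]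
  exact Fintype.card_congr (Equiv.subtypeEquivRight fun v => by simp [funext_iff])

theorem AddChar.sum_apply_linearMap {k V : Type*} [Field k] [AddCommGroup V] [Module k V]
    [Fintype V] (ψ : AddChar k ℂ) (hψ : ψ ≠ 1) (ℓ : V →ₗ[k] k) [Decidable (ℓ = 0)] :
    ∑ v, ψ (ℓ v) = if ℓ = 0 then (Fintype.card V : ℂ) else 0 := by
  split_ifs with hℓ
  · simp [hℓ]
  · have hχ : ψ.compAddMonoidHom ℓ.toAddMonoidHom ≠ 0 := fun h =>
      hψ <| compAddMonoidHom_injective_left _ (LinearMap.surjective_of_ne_zero hℓ) (h.trans rfl)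
    simpa using AddChar.sum_eq_zero_iff_ne_zero.mpr hχ

section MultilinearOn

variable {k V : Type*} [Field k] [AddCommGroup V] [Module k V] {d : ℕ} {S : Finset (Fin d)}
  {Q : (Fin d → V) → k}

theorem MultilinearOn.isLinearMap_update (hQ : MultilinearOn S Q) {j : Fin d} (hj : j ∈ S)
    (x : Fin d → V) : IsLinearMap k fun v => Q (Function.update x j v) :=
  ⟨hQ.1 x j hj, hQ.2.1 x j hj⟩

theorem MultilinearOn.apply_update_of_notMem (hQ : MultilinearOn S Q) {j : Fin d} (hj : j ∉ S)
    (x : Fin d → V) (v : V) : Q (Function.update x j v) = Q x :=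
  hQ.2.2 _ _ fun _ hi => Function.update_of_ne (ne_of_mem_of_not_mem hi hj) _ _

end MultilinearOn

theorem card_filter_le_pow_mul_card_filter_union {k V ι κ : Type*} [Field k] [Fintype k]
    [DecidableEq k] [AddCommGroup V] [Module k V] [Fintype V] [DecidableEq ι] [DecidableEq κ]
    [Fintype κ] (T : ι → (κ → V) → k) (j : κ) (A B : Finset ι)
    (hA : ∀ i ∈ A, ∀ x, IsLinearMap k fun v => T i (Function.update x j v))
    (hB : ∀ i ∈ B, ∀ x v, T i (Function.update x j v) = T i x) :
    #{x | ∀ i ∈ B, T i x = 0} ≤ Fintype.card k ^ #A * #{x | ∀ i ∈ A ∪ B, T i x = 0} := by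
  have hfiber : ∀ x, (if ∀ i ∈ B, T i x = 0 then Fintype.card V else 0) ≤
      Fintype.card k ^ #A * #{v | ∀ i ∈ A ∪ B, T i (Function.update x j v) = 0} := by
    intro x
    split_ifs with hx
    · let ℓ : A → V →ₗ[k] k := fun i => (hA i i.2 x).mk'
      refine (LinearMap.card_le_pow_mul_card_filter_forall_eq_zero ℓ).trans_eq ?_
      congr 1
      · simp
      · congr 1
        ext v
        have hBv : ∀ i ∈ B, T i (Function.update x j v) = 0 := fun i hi =>
          (hB i hi x v).trans (hx i hi)
        simpa [ℓ, or_imp, forall_and] using fun _ => hBv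
    · exact Nat.zero_le _
  refine Nat.le_of_mul_le_mul_left ?_ (Fintype.card_pos (α := V))
  calc Fintype.card V * #{x | ∀ i ∈ B, T i x = 0}
      = ∑ x, if ∀ i ∈ B, T i x = 0 then Fintype.card V else 0 := by
        rw [card_filter, mul_sum]; simp
    _ ≤ ∑ x, Fintype.card k ^ #A * #{v | ∀ i ∈ A ∪ B, T i (Function.update x j v) = 0} :=
        sum_le_sum fun x _ => hfiber x
    _ = Fintype.card V * (Fintype.card k ^ #A * #{x | ∀ i ∈ A ∪ B, T i x = 0}) := by
        simp only [← mul_sum, card_filter]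
        rw [Fintype.sum_sum_update_eq_card_nsmul j fun y => if ∀ i ∈ A ∪ B, T i y = 0 then 1 else 0,
          smul_eq_mul]
        ring

theorem card_pow_le_pow_mul_card_filter_forall_eq_zero {k V ι : Type*} [Field k] [Fintype k]
    [DecidableEq k] [AddCommGroup V] [Module k V] [Fintype V] [DecidableEq ι] {d : ℕ}
    (T : ι → (Fin d → V) → k) (S : ι → Finset (Fin d)) (U : Finset (Fin d)) (A : Finset ι)
    (hA : ∀ i ∈ A, (S i).Nonempty ∧ S i ⊆ U ∧ MultilinearOn (S i) (T i)) :
    Fintype.card V ^ d ≤ Fintype.card k ^ (#U * #A) * #{x | ∀ i ∈ A, T i x = 0} := by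
  induction U using Finset.induction_on generalizing A with
  | empty =>
    obtain rfl : A = ∅ := eq_empty_of_forall_notMem fun i hi => by
      obtain ⟨⟨a, ha⟩, hsub, -⟩ := hA i hi
      exact notMem_empty a (hsub ha)
    simp
  | insert j U hj ih =>
    set A₁ := A.filter (j ∈ S ·)
    set A₂ := A.filter (j ∉ S ·)
    have hA₂ := ih A₂ fun i hi => by
      obtain ⟨hiA, hjS⟩ := mem_filter.mp hi
      obtain ⟨hne, hsub, hT⟩ := hA i hiA
      exact ⟨hne, fun a ha => (mem_insert.mp (hsub ha)).resolve_left (ne_of_mem_of_not_mem ha hjS),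
        hT⟩
    have hstep := card_filter_le_pow_mul_card_filter_union T j A₁ A₂
      (fun i hi => ((hA i (mem_filter.mp hi).1).2.2).isLinearMap_update (mem_filter.mp hi).2)
      (fun i hi => ((hA i (mem_filter.mp hi).1).2.2).apply_update_of_notMem (mem_filter.mp hi).2)
    rw [filter_union_filter_not_eq] at hstep
    have hexp : #U * #A₂ + #A₁ ≤ #(insert j U) * #A := by
      rw [card_insert_of_notMem hj, ← card_filter_add_card_filter_not (s := A) (j ∈ S ·)]
      nlinarith
    calc Fintype.card V ^ d ≤ Fintype.card k ^ (#U * #A₂) * #{x | ∀ i ∈ A₂, T i x = 0} := hA₂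
      _ ≤ Fintype.card k ^ (#U * #A₂) * (Fintype.card k ^ #A₁ * #{x | ∀ i ∈ A, T i x = 0}) := by
        gcongr
      _ = Fintype.card k ^ (#U * #A₂ + #A₁) * #{x | ∀ i ∈ A, T i x = 0} := by ring
      _ ≤ Fintype.card k ^ (#(insert j U) * #A) * #{x | ∀ i ∈ A, T i x = 0} := by
        gcongr
        · exact Fintype.card_pos

theorem MultilinearMap.sum_addChar_eq_card_filter {k V ι : Type*} [Field k] [DecidableEq k]
    [AddCommGroup V] [Module k V] [Fintype V] [DecidableEq ι] [Fintype ι]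
    (ψ : AddChar k ℂ) (hψ : ψ ≠ 1) (P : MultilinearMap k (fun _ : ι => V) k) (j : ι) :
    ∑ x, ψ (P x) = #{x | ∀ v, P (Function.update x j v) = 0} := by
  have hV : (Fintype.card V : ℂ) ≠ 0 := Nat.cast_ne_zero.mpr Fintype.card_ne_zero
  refine mul_left_cancel₀ hV ?_
  calc (Fintype.card V : ℂ) * ∑ x, ψ (P x)
      = ∑ x, ∑ v, ψ (P.toLinearMap x j v) := by
        simp only [MultilinearMap.toLinearMap_apply]
        rw [Fintype.sum_sum_update_eq_card_nsmul j fun y => ψ (P y), nsmul_eq_mul]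
    _ = ∑ x, if P.toLinearMap x j = 0 then (Fintype.card V : ℂ) else 0 :=
        sum_congr rfl fun x _ => AddChar.sum_apply_linearMap ψ hψ _
    _ = Fintype.card V * #{x | ∀ v, P (Function.update x j v) = 0} := by
        rw [card_filter, Nat.cast_sum, mul_sum]
        refine sum_congr rfl fun x _ => ?_
        simp [LinearMap.ext_iff]

/-- For every `L, d` there is `C_{L,d} > 0`, independent of `dim V`, such that the
exponential sum of any multilinear homogeneous polynomial of degree `d ≥ 2` and rank
at most `L` is at least `C_{L,d}`. -/
theorem stmt2 {k : Type*} [Field k] [Fintype k] (ψ : AddChar k ℂ) (hψ : ψ ≠ 1)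
    (L d : ℕ) (hd : 2 ≤ d) :
    ∃ C : ℝ, 0 < C ∧
      ∀ (V : Type) [AddCommGroup V] [Module k V] [Fintype V],
      ∀ P : MultilinearMap k (fun _ : Fin d => V) k,
      (∃ (S : Fin L → Finset (Fin d)) (Q R : Fin L → (Fin d → V) → k),
        (∀ i, (S i).Nonempty ∧ ((S i)ᶜ).Nonempty ∧
          MultilinearOn (S i) (Q i) ∧ MultilinearOn ((S i)ᶜ) (R i)) ∧
        ∀ x : Fin d → V, P x = ∑ i : Fin L, Q i x * R i x) →
      C ≤ (((Fintype.card V : ℝ))⁻¹ ^ d *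
        (∑ x : Fin d → V, ψ (P x)).re) := by
  classical
  refine ⟨((Fintype.card k : ℝ) ^ (d * L))⁻¹, by positivity, ?_⟩
  rintro V _ _ _ P ⟨S, Q, R, hSQR, hP⟩
  let j : Fin d := ⟨0, by omega⟩
  have hfactor : ∀ i, ∃ (S' : Finset (Fin d)) (G : (Fin d → V) → k),
      S'.Nonempty ∧ MultilinearOn S' G ∧ j ∉ S' ∧ ∀ x, G x = 0 → Q i x * R i x = 0 := by
    intro i
    obtain ⟨hS, hSc, hQ, hR⟩ := hSQR i
    by_cases hj : j ∈ S i
    · exact ⟨(S i)ᶜ, R i, hSc, hR, notMem_compl.mpr hj, fun x h => by rw [h, mul_zero]⟩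
    · exact ⟨S i, Q i, hS, hQ, hj, fun x h => by rw [h, zero_mul]⟩
  choose S' G hS' hG hjS' hGQR using hfactor
  have hcount := card_pow_le_pow_mul_card_filter_forall_eq_zero G S' univ univ fun i _ =>
    ⟨hS' i, subset_univ _, hG i⟩
  rw [card_univ, card_univ, Fintype.card_fin, Fintype.card_fin] at hcount
  have hcard : Fintype.card V ^ d ≤
      Fintype.card k ^ (d * L) * #{x | ∀ v, P (Function.update x j v) = 0} := by
    refine hcount.trans (Nat.mul_le_mul_left _ (card_le_card fun x hx => ?_))
    simp only [mem_filter, mem_univ, true_and, forall_const] at hx ⊢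
    intro v
    rw [hP]
    exact sum_eq_zero fun i _ =>
      hGQR i _ <| ((hG i).apply_update_of_notMem (hjS' i) x v).trans (hx i)
  rw [MultilinearMap.sum_addChar_eq_card_filter ψ hψ P j, Complex.natCast_re, inv_pow,
    ← div_eq_inv_mul, le_div_iff₀ (by positivity), inv_mul_le_iff₀ (by positivity)]
  exact_mod_cast hcard
end

section
/- Let $\Gamma = \bigcup_n \Gamma_n$ be an abelian group written as an increasing union of finitely generated subgroups, $k$ a finite field, and $V, W$ countable-dimensional $k$-vector spaces. Suppose there exists $C = C(c)$ such that for any map $a^f : \Gamma \to \mathrm{Hom}^f(V, W)$ (finite-rank linear maps) with $r(a^f(\gamma' + \gamma'') - a^f(\gamma') - a^f(\gamma'')) \leq c$ for all $\gamma', \gamma''$, there is a homomorphism $\chi^f : \Gamma \to \mathrm{Hom}^f(V, W)$ with $r(a^f(\gamma) - \chi^f(\gamma)) \leq C$ for all $\gamma$. Then for any map $a : \Gamma \to \mathrm{Hom}(V, W)$ with $r(a(\gamma' + \gamma'') - a(\gamma') - a(\gamma'')) \leq c$ for all $\gamma', \gamma''$, there exists a homomorphism $\chi : \Gamma \to \mathrm{Hom}(V,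 W)$ with $r(a(\gamma) - \chi(\gamma)) \leq C$ for all $\gamma$. -/
/-!
Compressing `a` to the first `n` coordinates gives the finite-rank approximately additive map
`γ ↦ ιₙ πₙ a(γ) ιₙ πₙ`, so the hypothesis yields homomorphisms `Γₙ → End(kⁿ)` within rank `C`
of `πₙ a ιₙ`. For each `n` these form a finite nonempty set (`Γₙ` is finitely generated and
`End(kⁿ)` is finite), and compressing from level `n + 1` to level `n` maps one set to the other,
so König's lemma gives a coherent sequence `φₙ`. Coherence makes every matrix coefficient of
`φₙ(γ)` eventually constant in `n`; the limits assemble into a homomorphism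
`L : Γ → Hom(V, k^ℕ)`, and since over a finite field the rank cannot jump up in a coordinatewise
limit, `a(γ) - L(γ)` has rank at most `C`. A left inverse of `W ↪ k^ℕ` brings `L` back into
`Hom(V, W)`.
-/

open Cardinal Filter

noncomputable section

open CategoryTheory in
theorem exists_compatible_seq_of_finite {S : ℕ → Type*} [∀ n, Finite (S n)]
    [∀ n, Nonempty (S n)] (t : ∀ n, S (n + 1) → S n) :
    ∃ u : ∀ n, S n, ∀ n, t n (u (n + 1)) = u n := by
  let F : ℕᵒᵖ ⥤ Type _ := Functor.ofOpSequence fun n => TypeCat.ofHom (t n)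
  have : ∀ j : ℕᵒᵖ, Finite (F.obj j) := fun j => inferInstanceAs (Finite (S j.unop))
  have : ∀ j : ℕᵒᵖ, Nonempty (F.obj j) := fun j => inferInstanceAs (Nonempty (S j.unop))
  obtain ⟨u, hu⟩ := nonempty_sections_of_finite_inverse_system F
  refine ⟨fun n => u (.op n), fun n => ?_⟩
  have := hu (homOfLE (Nat.le_succ n)).op
  rwa [Functor.ofOpSequence_map_homOfLE_succ] at this

instance AddMonoidHom.finite_of_fg {G M : Type*} [AddGroup G] [AddGroup.FG G] [AddMonoid M]
    [Finite M] : Finite (G →+ M) := by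
  obtain ⟨S, hS, hfin⟩ := AddGroup.fg_iff.1 ‹AddGroup.FG G›
  have : Finite S := hfin
  refine Finite.of_injective (fun f : G →+ M => fun s : S => f s) fun f g hfg => ?_
  exact AddMonoidHom.eq_of_eqOn_dense hS fun x hx => congrFun hfg ⟨x, hx⟩

theorem Finset.eventually_subset_range (s : Finset ℕ) : ∀ᶠ n in atTop, s ⊆ Finset.range n :=
  let ⟨n, hn⟩ := s.exists_nat_subset_range
  eventually_atTop.2 ⟨n, fun _ hm => hn.trans (Finset.range_mono hm)⟩

theorem LinearIndependent.exists_finset_restrict {k ι κ : Type*} [Field k] [Finite k]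
    [Fintype κ] {w : κ → ι → k} (hw : LinearIndependent k w) :
    ∃ s : Finset ι, LinearIndependent k fun i (j : s) => w i j := by
  -- each of the finitely many nonzero coefficient vectors is detected by a single coordinate
  have hdetect : ∀ g : {g : κ → k // g ≠ 0}, ∃ j, ∑ i, g.1 i * w i j ≠ 0 := by
    intro ⟨g, hg⟩
    by_contra! h
    exact hg (funext (Fintype.linearIndependent_iff.1 hw g (funext fun j => by simpa using h j)))
  choose j hj using hdetect
  refine ⟨(Set.finite_range j).toFinset, Fintype.linearIndependent_iff.2 fun g hg i => ?_⟩
  by_contra hgi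
  have hg0 : g ≠ 0 := fun h => hgi (congrFun h i)
  exact hj ⟨g, hg0⟩ (by simpa using congrFun hg ⟨j ⟨g, hg0⟩, by simp⟩)

theorem rank_le_of_eventually_eq {k M ι α : Type*} [Field k] [Finite k] [AddCommGroup M]
    [Module k M] {l : Filter α} [l.NeBot] {C : ℕ} (d : M →ₗ[k] ι → k) (D : α → M →ₗ[k] ι → k)
    (hD : ∀ᶠ N in l, LinearMap.rank (D N) ≤ C) (h : ∀ v i, ∀ᶠ N in l, D N v i = d v i) :
    LinearMap.rank d ≤ C := by
  by_contra! hlt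
  obtain ⟨s, hcard, hs⟩ := LinearMap.le_rank_iff_exists_linearIndependent_finset.1
    (by exact_mod_cast Cardinal.succ_natCast C ▸ Order.succ_le_of_lt hlt)
  obtain ⟨t, ht⟩ := LinearIndependent.exists_finset_restrict (w := fun v : (s : Set M) => d v) hs
  obtain ⟨N, hDN, hN⟩ := (hD.and ((Finset.eventually_all s).2 fun v _ =>
    (Finset.eventually_all t).2 fun i _ => h v i)).exists
  have hsN : LinearIndependent k fun v : (s : Set M) => D N v := by
    refine LinearIndependent.of_comp (LinearMap.funLeft k k ((↑) : t → ι)) ?_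
    convert ht using 2 with v
    funext i
    exact hN v v.2 i i.2
  have := hDN.trans' (LinearMap.le_rank_iff_exists_linearIndependent_finset.2 ⟨s, hcard, hsN⟩)
  exact absurd (Nat.cast_le.1 this) (by omega)

theorem exists_addMonoidHom_eventually_eq {Γ M ι R : Type*} [AddCommGroup Γ] [Ring R]
    [AddCommGroup M] [Module R M] (A : ℕ → Γ → M →ₗ[R] ι → R)
    (hconst : ∀ γ v i, EventuallyConst (fun N => A N γ v i) atTop)
    (hadd : ∀ γ γ', ∀ᶠ N in atTop, A N (γ + γ') = A N γ + A N γ') :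
    ∃ L : Γ →+ M →ₗ[R] ι → R, ∀ γ v i, ∀ᶠ N in atTop, A N γ v i = L γ v i := by
  choose limit hlimit using
    fun γ v i => eventuallyConst_iff_exists_eventuallyEq.1 (hconst γ v i)
  let L (γ : Γ) : M →ₗ[R] ι → R :=
    { toFun v i := limit γ v i
      map_add' v w := funext fun i =>
        (((hlimit γ (v + w) i).and ((hlimit γ v i).and (hlimit γ w i))).exists.elim
          fun N ⟨h₁, h₂, h₃⟩ => by simp_all)
      map_smul' r v := funext fun i =>
        ((hlimit γ (r • v) i).and (hlimit γ v i)).exists.elim fun N ⟨h₁, h₂⟩ => by simp_all }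
  refine ⟨AddMonoidHom.mk' L fun γ γ' => LinearMap.ext fun v => funext fun i => ?_,
    fun γ v i => hlimit γ v i⟩
  obtain ⟨N, h, h₁, h₂, h₃⟩ :=
    ((hadd γ γ').and ((hlimit (γ + γ') v i).and ((hlimit γ v i).and (hlimit γ' v i)))).exists
  simp_all [L]

namespace FinTrunc

variable (k : Type*) [Field k]

def truncate (n : ℕ) : (ℕ →₀ k) →ₗ[k] Fin n → k :=
  LinearMap.funLeft k k Fin.val ∘ₗ Finsupp.lcoeFun

def extend (n : ℕ) : (Fin n → k) →ₗ[k] ℕ →₀ k :=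
  Finsupp.lmapDomain k k Fin.val ∘ₗ (Finsupp.linearEquivFunOnFinite k k (Fin n)).symm.toLinearMap

variable {k}

@[simp]
theorem truncate_apply (n : ℕ) (v : ℕ →₀ k) (i : Fin n) : truncate k n v i = v i := rfl

theorem extend_apply (n : ℕ) (x : Fin n → k) (j : ℕ) :
    extend k n x j = if h : j < n then x ⟨j, h⟩ else 0 := by
  split_ifs with h
  · exact Finsupp.mapDomain_apply Fin.val_injective _ ⟨j, h⟩
  · exact Finsupp.mapDomain_of_notMem_range _ _ fun ⟨i, hi⟩ => h (hi ▸ i.2)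

@[simp]
theorem extend_apply_val (n : ℕ) (x : Fin n → k) (i : Fin n) : extend k n x i = x i := by
  simp [extend_apply]

@[simp]
theorem truncate_extend (n : ℕ) (x : Fin n → k) : truncate k n (extend k n x) = x := by
  funext i
  simp

theorem extend_truncate_apply_of_lt {n j : ℕ} (hj : j < n) (v : ℕ →₀ k) :
    extend k n (truncate k n v) j = v j := by
  simp [extend_apply, hj]

theorem extend_truncate_of_support_subset {n : ℕ} {v : ℕ →₀ k}
    (hv : v.support ⊆ Finset.range n) : extend k n (truncate k n v) = v := by
  ext j
  by_cases hj : j < n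
  · exact extend_truncate_apply_of_lt hj v
  · rw [extend_apply, dif_neg hj, eq_comm, ← Finsupp.notMem_support_iff]
    exact fun h => hj (Finset.mem_range.1 (hv h))

theorem support_extend_subset (n : ℕ) (x : Fin n → k) :
    (extend k n x).support ⊆ Finset.range n := fun j hj => by
  by_contra h
  rw [Finset.mem_range] at h
  simp [extend_apply, h] at hj

def compress (n : ℕ) : ((ℕ →₀ k) →ₗ[k] ℕ →₀ k) →+ (Fin n → k) →ₗ[k] Fin n → k where
  toFun f := truncate k n ∘ₗ f ∘ₗ extend k n
  map_zero' := rfl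
  map_add' _ _ := rfl

def expand (n : ℕ) : ((Fin n → k) →ₗ[k] Fin n → k) →+ (ℕ →₀ k) →ₗ[k] ℕ →₀ k where
  toFun φ := extend k n ∘ₗ φ ∘ₗ truncate k n
  map_zero' := by simp
  map_add' _ _ := by rw [LinearMap.add_comp, LinearMap.comp_add]

@[simp]
theorem compress_apply (n : ℕ) (f : (ℕ →₀ k) →ₗ[k] ℕ →₀ k) :
    compress n f = truncate k n ∘ₗ f ∘ₗ extend k n := rfl

@[simp]
theorem expand_apply (n : ℕ) (φ : (Fin n → k) →ₗ[k] Fin n → k) :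
    expand n φ = extend k n ∘ₗ φ ∘ₗ truncate k n := rfl

-- `rw [map_sub]` fails here: the `Sub` instance of `(ℕ →₀ k) →ₗ[k] ℕ →₀ k` matches the one
-- `map_sub` expects only up to unfolding.
theorem compress_sub (n : ℕ) (f g : (ℕ →₀ k) →ₗ[k] ℕ →₀ k) :
    compress n (f - g) = compress n f - compress n g :=
  map_sub (compress n) f g

theorem expand_sub (n : ℕ) (φ ψ : (Fin n → k) →ₗ[k] Fin n → k) :
    expand n (φ - ψ) = expand n φ - expand n ψ :=
  map_sub (expand n) φ ψ

@[simp]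
theorem compress_expand (n : ℕ) (φ : (Fin n → k) →ₗ[k] Fin n → k) :
    compress n (expand n φ) = φ := by
  ext x
  simp

theorem compress_expand_compress {n m : ℕ} (h : n ≤ m) (f : (ℕ →₀ k) →ₗ[k] ℕ →₀ k) :
    compress n (expand m (compress m f)) = compress n f := by
  refine LinearMap.ext fun x => funext fun i => ?_
  simp only [compress_apply, expand_apply, LinearMap.comp_apply,
    extend_truncate_of_support_subset ((support_extend_subset n x).trans (Finset.range_mono h))]
  exact extend_truncate_apply_of_lt (i.2.trans_le h) _

theorem expand_compress_apply {n j : ℕ} (f : (ℕ →₀ k) →ₗ[k] ℕ →₀ k) {v : ℕ →₀ k}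
    (hv : v.support ⊆ Finset.range n) (hj : j < n) : expand n (compress n f) v j = f v j := by
  simp only [compress_apply, expand_apply, LinearMap.comp_apply,
    extend_truncate_of_support_subset hv]
  exact extend_truncate_apply_of_lt hj _

theorem eventually_expand_compress_apply (f : (ℕ →₀ k) →ₗ[k] ℕ →₀ k) (v : ℕ →₀ k) (j : ℕ) :
    ∀ᶠ n in atTop, expand n (compress n f) v j = f v j :=
  ((v.support.eventually_subset_range).and (eventually_gt_atTop j)).mono
    fun _ ⟨hv, hj⟩ => expand_compress_apply f hv hj

theorem rank_compress_le (n : ℕ) (f : (ℕ →₀ k) →ₗ[k] ℕ →₀ k) :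
    LinearMap.rank (compress n f) ≤ LinearMap.rank f :=
  (LinearMap.rank_comp_le_right _ _).trans (LinearMap.rank_comp_le_left _ _)

theorem rank_expand_le (n : ℕ) (φ : (Fin n → k) →ₗ[k] Fin n → k) :
    LinearMap.rank (expand n φ) ≤ LinearMap.rank φ :=
  (LinearMap.rank_comp_le_right _ _).trans (LinearMap.rank_comp_le_left _ _)

end FinTrunc

section Approximation

open FinTrunc

variable {k Γ : Type*} [Field k] [AddCommGroup Γ] {Γn : ℕ → AddSubgroup Γ}
  {a : Γ → (ℕ →₀ k) →ₗ[k] ℕ →₀ k} {C : ℕ}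

variable (Γn a C) in
def LevelApprox (n : ℕ) : Type _ :=
  {φ : Γn n →+ (Fin n → k) →ₗ[k] Fin n → k //
    ∀ g : Γn n, LinearMap.rank (compress n (a g) - φ g) ≤ C}

theorem finite_levelApprox [Finite k] {n : ℕ} (hfg : (Γn n).FG) :
    Finite (LevelApprox Γn a C n) := by
  have : AddGroup.FG (Γn n) := (AddGroup.fg_iff_addSubgroup_fg _).2 hfg
  have : Finite ((Fin n → k) →ₗ[k] Fin n → k) := Module.finite_of_finite k
  exact Subtype.finite

theorem nonempty_levelApprox {c : ℕ}
    (hyp : ∀ b : Γ → (ℕ →₀ k) →ₗ[k] ℕ →₀ k, (∀ γ, LinearMap.rank (b γ) < ℵ₀) →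
      (∀ γ γ', LinearMap.rank (b (γ + γ') - b γ - b γ') ≤ c) →
      ∃ χ : Γ →+ (ℕ →₀ k) →ₗ[k] ℕ →₀ k, ∀ γ, LinearMap.rank (b γ - χ γ) ≤ C)
    (ha : ∀ γ γ', LinearMap.rank (a (γ + γ') - a γ - a γ') ≤ c) (n : ℕ) :
    Nonempty (LevelApprox Γn a C n) := by
  have hfin (γ : Γ) : LinearMap.rank (expand n (compress n (a γ))) < ℵ₀ :=
    (rank_expand_le _ _).trans_lt
      ((LinearMap.rank_le_domain _).trans_lt (Module.rank_lt_aleph0 k (Fin n → k)))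
  have hdefect (γ γ' : Γ) : LinearMap.rank (expand n (compress n (a (γ + γ')))
      - expand n (compress n (a γ)) - expand n (compress n (a γ'))) ≤ c := by
    rw [← expand_sub, ← expand_sub, ← compress_sub, ← compress_sub]
    exact (rank_expand_le _ _).trans ((rank_compress_le _ _).trans (ha γ γ'))
  obtain ⟨χ, hχ⟩ := hyp _ hfin hdefect
  refine ⟨(compress n).comp (χ.comp (Γn n).subtype), fun g => ?_⟩
  have := (rank_compress_le n _).trans (hχ g)
  rwa [compress_sub, compress_expand] at this

def LevelApprox.restrict (hmono : Monotone Γn) (n : ℕ) (ψ : LevelApprox Γn a C (n + 1)) :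
    LevelApprox Γn a C n :=
  ⟨(compress n).comp ((expand (n + 1)).comp (ψ.1.comp (AddSubgroup.inclusion (hmono n.le_succ)))),
    fun g => by
      have := (rank_compress_le n _).trans
        ((rank_expand_le _ _).trans (ψ.2 (AddSubgroup.inclusion (hmono n.le_succ) g)))
      rwa [expand_sub, compress_sub, compress_expand_compress n.le_succ] at this⟩

theorem eventually_mem (hmono : Monotone Γn) (hunion : ∀ γ : Γ, ∃ n, γ ∈ Γn n) (γ : Γ) :
    ∀ᶠ n in atTop, γ ∈ Γn n :=
  let ⟨n, hn⟩ := hunion γ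
  eventually_atTop.2 ⟨n, fun _ hm => hmono hm hn⟩

open scoped Classical in
def opAt (φ : ∀ n, Γn n →+ (Fin n → k) →ₗ[k] Fin n → k) (n : ℕ) (γ : Γ) :
    (Fin n → k) →ₗ[k] Fin n → k :=
  if h : γ ∈ Γn n then φ n ⟨γ, h⟩ else 0

theorem opAt_of_mem (φ : ∀ n, Γn n →+ (Fin n → k) →ₗ[k] Fin n → k) {n : ℕ} {γ : Γ}
    (h : γ ∈ Γn n) : opAt φ n γ = φ n ⟨γ, h⟩ :=
  dif_pos h

theorem opAt_add (φ : ∀ n, Γn n →+ (Fin n → k) →ₗ[k] Fin n → k) {n : ℕ} {γ γ' : Γ}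
    (h : γ ∈ Γn n) (h' : γ' ∈ Γn n) : opAt φ n (γ + γ') = opAt φ n γ + opAt φ n γ' := by
  rw [opAt_of_mem φ h, opAt_of_mem φ h', opAt_of_mem φ (add_mem h h'), ← map_add]
  rfl

theorem exists_eventually_expand_opAt_eq (hmono : Monotone Γn)
    (hunion : ∀ γ : Γ, ∃ n, γ ∈ Γn n) (φ : ∀ n, Γn n →+ (Fin n → k) →ₗ[k] Fin n → k)
    (hφ : ∀ n (g : Γn n),
      φ n g = compress n (expand (n + 1) (φ (n + 1) (AddSubgroup.inclusion (hmono n.le_succ) g)))) :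
    ∃ L : Γ →+ (ℕ →₀ k) →ₗ[k] ℕ → k,
      ∀ γ v j, ∀ᶠ n in atTop, expand n (opAt φ n γ) v j = L γ v j := by
  refine exists_addMonoidHom_eventually_eq (fun n γ => Finsupp.lcoeFun ∘ₗ expand n (opAt φ n γ))
    (fun γ v j => eventuallyConst_atTop_nat.2 (eventually_atTop.1 ?_))
    (fun γ γ' => ((eventually_mem hmono hunion γ).and (eventually_mem hmono hunion γ')).mono
      fun n ⟨h, h'⟩ => by rw [opAt_add φ h h', map_add, LinearMap.comp_add])
  filter_upwards [eventually_mem hmono hunion γ, v.support.eventually_subset_range,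
    eventually_gt_atTop j] with n hγ hv hj
  have hstep : opAt φ n γ = compress n (expand (n + 1) (opAt φ (n + 1) γ)) := by
    rw [opAt_of_mem φ hγ, opAt_of_mem φ (hmono n.le_succ hγ), hφ]
    rfl
  simp only [LinearMap.comp_apply, Finsupp.lcoeFun_apply, hstep, expand_compress_apply _ hv hj]

theorem rank_lcoeFun_comp_sub_le [Finite k] (hmono : Monotone Γn)
    (hunion : ∀ γ : Γ, ∃ n, γ ∈ Γn n) (φ : ∀ n, Γn n →+ (Fin n → k) →ₗ[k] Fin n → k)
    (hφC : ∀ n (g : Γn n), LinearMap.rank (compress n (a g) - φ n g) ≤ C)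
    (L : Γ →+ (ℕ →₀ k) →ₗ[k] ℕ → k)
    (hL : ∀ γ v j, ∀ᶠ n in atTop, expand n (opAt φ n γ) v j = L γ v j) (γ : Γ) :
    LinearMap.rank (Finsupp.lcoeFun ∘ₗ a γ - L γ) ≤ C := by
  refine rank_le_of_eventually_eq _
    (fun n => Finsupp.lcoeFun ∘ₗ expand n (compress n (a γ) - opAt φ n γ))
    ((eventually_mem hmono hunion γ).mono fun n h => ?_) fun v j => ?_
  · rw [opAt_of_mem φ h]
    exact (LinearMap.rank_comp_le_right _ _).trans ((rank_expand_le _ _).trans (hφC n ⟨γ, h⟩))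
  · filter_upwards [eventually_expand_compress_apply (a γ) v j, hL γ v j] with n h₁ h₂
    rw [expand_sub, LinearMap.comp_apply, LinearMap.sub_apply, map_sub]
    simp only [Finsupp.lcoeFun_apply, Pi.sub_apply, h₁, h₂]
    rfl

end Approximation

end

/-- Reduction from maps into all of `Hom(V,W)` to maps into finite-rank homomorphisms:
if every approximately additive map `Γ → Hom^f(V,W)` (defect rank ≤ c) is within rank
`C` of a homomorphism into `Hom^f(V,W)`, then every approximately additive map
`Γ → Hom(V,W)` is within rank `C` of a homomorphism. Here `Γ = ⋃ Γₙ` is an increasing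
union of finitely generated subgroups and `V = W = ℕ →₀ k` is countable-dimensional. -/
theorem stmt6 {k : Type*} [Field k] [Fintype k]
    {Γ : Type*} [AddCommGroup Γ] (Γn : ℕ → AddSubgroup Γ)
    (hmono : Monotone Γn) (hfg : ∀ n, (Γn n).FG) (hunion : ∀ γ : Γ, ∃ n, γ ∈ Γn n)
    (c C : ℕ)
    (hyp : ∀ a : Γ → (ℕ →₀ k) →ₗ[k] (ℕ →₀ k),
      (∀ γ, LinearMap.rank (a γ) < ℵ₀) →
      (∀ γ γ', LinearMap.rank (a (γ + γ') - a γ - a γ') ≤ (c : Cardinal)) →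
      ∃ χ : Γ →+ ((ℕ →₀ k) →ₗ[k] (ℕ →₀ k)),
        (∀ γ, LinearMap.rank (χ γ) < ℵ₀) ∧
        ∀ γ, LinearMap.rank (a γ - χ γ) ≤ (C : Cardinal))
    (a : Γ → (ℕ →₀ k) →ₗ[k] (ℕ →₀ k))
    (ha : ∀ γ γ', LinearMap.rank (a (γ + γ') - a γ - a γ') ≤ (c : Cardinal)) :
    ∃ χ : Γ →+ ((ℕ →₀ k) →ₗ[k] (ℕ →₀ k)),
      ∀ γ, LinearMap.rank (a γ - χ γ) ≤ (C : Cardinal) := by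
  have : ∀ n, Finite (LevelApprox Γn a C n) := fun n => finite_levelApprox (hfg n)
  have : ∀ n, Nonempty (LevelApprox Γn a C n) :=
    nonempty_levelApprox (C := C) (fun b hb hdef => (hyp b hb hdef).imp fun _ => And.right) ha
  obtain ⟨φ, hφ⟩ := exists_compatible_seq_of_finite fun n => LevelApprox.restrict (a := a) (C := C) hmono n
  obtain ⟨L, hL⟩ := exists_eventually_expand_opAt_eq hmono hunion (fun n => (φ n).1)
    fun n g => by rw [← hφ n]; rfl
  have hrank := rank_lcoeFun_comp_sub_le hmono hunion _ (fun n => (φ n).2) L hL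
  obtain ⟨T, hT⟩ := (Finsupp.lcoeFun (α := ℕ) (M := k) (R := k)).exists_leftInverse_of_injective
    (LinearMap.ker_eq_bot.2 DFunLike.coe_injective)
  refine ⟨(LinearMap.compRight k T).toAddMonoidHom.comp L, fun γ => ?_⟩
  have hsplit : a γ - T ∘ₗ L γ = T ∘ₗ (Finsupp.lcoeFun ∘ₗ a γ - L γ) := by
    rw [LinearMap.comp_sub, ← LinearMap.comp_assoc, hT, LinearMap.id_comp]
  simpa [hsplit] using (LinearMap.rank_comp_le_right _ T).trans (hrank γ)
end
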